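/- Let (A⊗V,μ_{A⊗V}) be a weak crossed product with preunit ν, and let A×V, p_{A⊗V}, i_{A⊗V} be a splitting of the idempotent ∇_{A⊗V}. Then A×V is a monoid with product μ_{A×V}=p_{A⊗V}∘μ_{A⊗V}∘(i_{A⊗V}⊗i_{A⊗V}) and unit η_{A×V}=p_{A⊗V}∘ν. -/

import Mathlib

/-!
The twisted, cocycle and measuring conditions make `μ_{A⊗V}` associative, `∇_{A⊗V} ∘ σ = σ` gives
`∇_{A⊗V} ∘ μ_{A⊗V} = μ_{A⊗V}`, and the preunit conditions say that multiplying by `ν` on either side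
is `∇_{A⊗V}`. That is all one needs of an associative `m` and an idempotent `e`: on a splitting
`(p, i)` of `e`, the inclusion `i` is multiplicative because `e ∘ m = m`, and `p ∘ ν` is a two-sided
unit because associativity turns `m ∘ (e ⊗ X)` and `m ∘ (X ⊗ e)` into `e ∘ m`.

Computations in `A ⊗ -` go through `tmap γ = (μ_A ⊗ Y) ∘ (A ⊗ γ)`, the Kleisli extension of the
monad `A ⊗ -`, so that associativity of `A` becomes `tmap δ ∘ tmap γ = tmap (tmap δ ∘ γ)`.
-/

open CategoryTheory MonoidalCategory

universe v u

namespace WeakCrossed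

variable {C : Type u} [Category.{v} C] [MonoidalCategory C]

/-- The monoid axioms for a triple `(A, η, μ)` in a monoidal category. -/
def IsMon (A : C) (eta : 𝟙_ C ⟶ A) (mu : A ⊗ A ⟶ A) : Prop :=
  (eta ▷ A) ≫ mu = (λ_ A).hom ∧ (A ◁ eta) ≫ mu = (ρ_ A).hom ∧
    (mu ▷ A) ≫ mu = (α_ A A A).hom ≫ (A ◁ mu) ≫ mu

/-- The morphism `(μ_A ⊗ Y) ∘ (A ⊗ f) : (A ⊗ X) ⊗ Z ⟶ A ⊗ Y` for `f : X ⊗ Z ⟶ A ⊗ Y`. -/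
def phi (A : C) {X Z Y : C} (mu : A ⊗ A ⟶ A) (f : X ⊗ Z ⟶ A ⊗ Y) :
    (A ⊗ X) ⊗ Z ⟶ A ⊗ Y :=
  (α_ A X Z).hom ≫ (A ◁ f) ≫ (α_ A A Y).inv ≫ (mu ▷ Y)

/-- The measuring condition `(μ_A ⊗ V) ∘ (A ⊗ ψ) ∘ (ψ ⊗ A) = ψ ∘ (V ⊗ μ_A)`. -/
def Measuring (A V : C) (mu : A ⊗ A ⟶ A) (psi : V ⊗ A ⟶ A ⊗ V) : Prop :=
  (psi ▷ A) ≫ phi A mu psi = (α_ V A A).hom ≫ (V ◁ mu) ≫ psi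

/-- The idempotent `∇_{A⊗V} = (μ_A ⊗ V) ∘ (A ⊗ ψ) ∘ (A ⊗ V ⊗ η_A)`. -/
def nabla (A V : C) (eta : 𝟙_ C ⟶ A) (mu : A ⊗ A ⟶ A) (psi : V ⊗ A ⟶ A ⊗ V) :
    A ⊗ V ⟶ A ⊗ V :=
  (ρ_ (A ⊗ V)).inv ≫ ((A ⊗ V) ◁ eta) ≫ phi A mu psi

/-- The twisted condition
`(μ_A ⊗ V) ∘ (A ⊗ ψ) ∘ (σ ⊗ A) = (μ_A ⊗ V) ∘ (A ⊗ σ) ∘ (ψ ⊗ V) ∘ (V ⊗ ψ)`. -/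
def Twisted (A V : C) (mu : A ⊗ A ⟶ A) (psi : V ⊗ A ⟶ A ⊗ V)
    (sig : V ⊗ V ⟶ A ⊗ V) : Prop :=
  (sig ▷ A) ≫ phi A mu psi =
    (α_ V V A).hom ≫ (V ◁ psi) ≫ (α_ V A V).inv ≫ (psi ▷ V) ≫ phi A mu sig

/-- The cocycle condition
`(μ_A ⊗ V) ∘ (A ⊗ σ) ∘ (σ ⊗ V) = (μ_A ⊗ V) ∘ (A ⊗ σ) ∘ (ψ ⊗ V) ∘ (V ⊗ σ)`. -/
def Cocycle (A V : C) (mu : A ⊗ A ⟶ A) (psi : V ⊗ A ⟶ A ⊗ V)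
    (sig : V ⊗ V ⟶ A ⊗ V) : Prop :=
  (sig ▷ V) ≫ phi A mu sig =
    (α_ V V V).hom ≫ (V ◁ sig) ≫ (α_ V A V).inv ≫ (psi ▷ V) ≫ phi A mu sig

/-- The weak crossed product multiplication
`μ_{A⊗V} = (μ_A ⊗ V) ∘ (μ_A ⊗ σ) ∘ (A ⊗ ψ ⊗ V)`. -/
def prodAV (A V : C) (mu : A ⊗ A ⟶ A) (psi : V ⊗ A ⟶ A ⊗ V)
    (sig : V ⊗ V ⟶ A ⊗ V) : (A ⊗ V) ⊗ (A ⊗ V) ⟶ A ⊗ V :=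
  (α_ A V (A ⊗ V)).hom ≫ (A ◁ ((α_ V A V).inv ≫ (psi ▷ V) ≫ (α_ A V V).hom)) ≫
    (α_ A A (V ⊗ V)).inv ≫ (mu ⊗ₘ sig) ≫ (α_ A A V).inv ≫ (mu ▷ V)

/-- The morphism `η_A ⊗ V : V ⟶ A ⊗ V`. -/
def etaT (A V : C) (eta : 𝟙_ C ⟶ A) : V ⟶ A ⊗ V := (λ_ V).inv ≫ (eta ▷ V)

/-- The morphism `β_ν = (μ_A ⊗ V) ∘ (A ⊗ ν) : A ⟶ A ⊗ V`. -/
def beta (A V : C) (mu : A ⊗ A ⟶ A) (nu : 𝟙_ C ⟶ A ⊗ V) : A ⟶ A ⊗ V :=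
  (ρ_ A).inv ≫ (A ◁ nu) ≫ (α_ A A V).inv ≫ (mu ▷ V)

/-- Preunit condition (pre1):
`(μ_A ⊗ V) ∘ (A ⊗ σ) ∘ (ψ ⊗ V) ∘ (V ⊗ ν) = ∇_{A⊗V} ∘ (η_A ⊗ V)`. -/
def Pre1 (A V : C) (eta : 𝟙_ C ⟶ A) (mu : A ⊗ A ⟶ A) (psi : V ⊗ A ⟶ A ⊗ V)
    (sig : V ⊗ V ⟶ A ⊗ V) (nu : 𝟙_ C ⟶ A ⊗ V) : Prop :=
  (ρ_ V).inv ≫ (V ◁ nu) ≫ (α_ V A V).inv ≫ (psi ▷ V) ≫ phi A mu sig =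
    etaT A V eta ≫ nabla A V eta mu psi

/-- Preunit condition (pre2):
`(μ_A ⊗ V) ∘ (A ⊗ σ) ∘ (ν ⊗ V) = ∇_{A⊗V} ∘ (η_A ⊗ V)`. -/
def Pre2 (A V : C) (eta : 𝟙_ C ⟶ A) (mu : A ⊗ A ⟶ A) (psi : V ⊗ A ⟶ A ⊗ V)
    (sig : V ⊗ V ⟶ A ⊗ V) (nu : 𝟙_ C ⟶ A ⊗ V) : Prop :=
  (λ_ V).inv ≫ (nu ▷ V) ≫ phi A mu sig = etaT A V eta ≫ nabla A V eta mu psi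

/-- Preunit condition (pre3): `(μ_A ⊗ V) ∘ (A ⊗ ψ) ∘ (ν ⊗ A) = β_ν`. -/
def Pre3 (A V : C) (mu : A ⊗ A ⟶ A) (psi : V ⊗ A ⟶ A ⊗ V)
    (nu : 𝟙_ C ⟶ A ⊗ V) : Prop :=
  (λ_ A).inv ≫ (nu ▷ A) ≫ phi A mu psi = beta A V mu nu

/-- `(A ⊗ V, μ_{A⊗V})` is a weak crossed product: measuring, twisted and cocycle
conditions hold and `∇_{A⊗V} ∘ σ = σ`. -/
def WCP (A V : C) (eta : 𝟙_ C ⟶ A) (mu : A ⊗ A ⟶ A) (psi : V ⊗ A ⟶ A ⊗ V)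
    (sig : V ⊗ V ⟶ A ⊗ V) : Prop :=
  Measuring A V mu psi ∧ Twisted A V mu psi sig ∧ Cocycle A V mu psi sig ∧
    sig ≫ nabla A V eta mu psi = sig

/-- `(A ⊗ V, μ_{A⊗V})` is a weak crossed product with preunit `ν`. -/
def WCPpre (A V : C) (eta : 𝟙_ C ⟶ A) (mu : A ⊗ A ⟶ A) (psi : V ⊗ A ⟶ A ⊗ V)
    (sig : V ⊗ V ⟶ A ⊗ V) (nu : 𝟙_ C ⟶ A ⊗ V) : Prop :=
  WCP A V eta mu psi sig ∧ Pre1 A V eta mu psi sig nu ∧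
    Pre2 A V eta mu psi sig nu ∧ Pre3 A V mu psi nu

/-- `(μ_A ⊗ Y) ∘ (A ⊗ γ) : A ⊗ X ⟶ A ⊗ Y` for `γ : X ⟶ A ⊗ Y`. -/
def tmap (A : C) {X Y : C} (mu : A ⊗ A ⟶ A) (g : X ⟶ A ⊗ Y) : A ⊗ X ⟶ A ⊗ Y :=
  (A ◁ g) ≫ (α_ A A Y).inv ≫ (mu ▷ Y)

/-- Left `A`-linearity of `T : A ⊗ X ⟶ A ⊗ Y`:
`T ∘ (μ_A ⊗ X) = (μ_A ⊗ Y) ∘ (A ⊗ T)`. -/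
def LeftLin (A : C) {X Y : C} (mu : A ⊗ A ⟶ A) (T : A ⊗ X ⟶ A ⊗ Y) : Prop :=
  (mu ▷ X) ≫ T = (α_ A A X).hom ≫ (A ◁ T) ≫ (α_ A A Y).inv ≫ (mu ▷ Y)

/-- `ν` is a preunit for the associative product `m` on `X`. -/
def IsPreunit {X : C} (m : X ⊗ X ⟶ X) (nu : 𝟙_ C ⟶ X) : Prop :=
  (ρ_ X).inv ≫ (X ◁ nu) ≫ m = (λ_ X).inv ≫ (nu ▷ X) ≫ m ∧
  (ρ_ X).inv ≫ (X ◁ nu) ≫ m =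
    (ρ_ X).inv ≫ (X ◁ ((λ_ (𝟙_ C)).inv ≫ (nu ⊗ₘ nu) ≫ m)) ≫ m

/-- Brzeziński normalization conditions: `ψ ∘ (η_V ⊗ A) = A ⊗ η_V`,
`ψ ∘ (V ⊗ η_A) = η_A ⊗ V`, `σ ∘ (η_V ⊗ V) = σ ∘ (V ⊗ η_V) = η_A ⊗ V`. -/
def BrzNorm (A V : C) (eta : 𝟙_ C ⟶ A) (etaV : 𝟙_ C ⟶ V) (psi : V ⊗ A ⟶ A ⊗ V)
    (sig : V ⊗ V ⟶ A ⊗ V) : Prop :=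
  (λ_ A).inv ≫ (etaV ▷ A) ≫ psi = (ρ_ A).inv ≫ (A ◁ etaV) ∧
  (ρ_ V).inv ≫ (V ◁ eta) ≫ psi = (λ_ V).inv ≫ (eta ▷ V) ∧
  (λ_ V).inv ≫ (etaV ▷ V) ≫ sig = (λ_ V).inv ≫ (eta ▷ V) ∧
  (ρ_ V).inv ≫ (V ◁ etaV) ≫ sig = (λ_ V).inv ≫ (eta ▷ V)

section Retract

variable {X : C} {m : X ⊗ X ⟶ X} {u : 𝟙_ C ⟶ X} {e : X ⟶ X}

theorem whiskerRight_comp_mul_eq_mul_comp (hassoc : (m ▷ X) ≫ m = (α_ X X X).hom ≫ (X ◁ m) ≫ m)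
    (hu : (λ_ X).inv ≫ (u ▷ X) ≫ m = e) : (e ▷ X) ≫ m = m ≫ e := by
  have hcoh : ((λ_ X).inv ▷ X) ≫ ((u ▷ X) ▷ X) ≫ (α_ X X X).hom =
      (λ_ (X ⊗ X)).inv ≫ (u ▷ (X ⊗ X)) := by monoidal
  rw [← hu]
  simp only [comp_whiskerRight, Category.assoc, hassoc]
  rw [reassoc_of% hcoh, ← whisker_exchange_assoc, leftUnitor_inv_naturality_assoc]

theorem whiskerLeft_comp_mul_eq_mul_comp (hassoc : (m ▷ X) ≫ m = (α_ X X X).hom ≫ (X ◁ m) ≫ m)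
    (hu : (ρ_ X).inv ≫ (X ◁ u) ≫ m = e) : (X ◁ e) ≫ m = m ≫ e := by
  have hcoh : (X ◁ (ρ_ X).inv) ≫ (X ◁ (X ◁ u)) ≫ (α_ X X X).inv =
      (ρ_ (X ⊗ X)).inv ≫ ((X ⊗ X) ◁ u) := by monoidal
  rw [← hu]
  simp only [MonoidalCategory.whiskerLeft_comp, Category.assoc]
  rw [← Iso.inv_hom_id_assoc (α_ X X X) (X ◁ m ≫ m), ← hassoc, reassoc_of% hcoh,
    whisker_exchange_assoc, rightUnitor_inv_naturality_assoc]

variable {P : C} {p : X ⟶ P} {i : P ⟶ X}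

theorem isMon_of_retract (hassoc : (m ▷ X) ≫ m = (α_ X X X).hom ≫ (X ◁ m) ≫ m)
    (hul : (λ_ X).inv ≫ (u ▷ X) ≫ m = e) (hur : (ρ_ X).inv ≫ (X ◁ u) ≫ m = e)
    (hme : m ≫ e = m) (hpi : p ≫ i = e) (hip : i ≫ p = 𝟙 P) :
    IsMon P (u ≫ p) ((i ⊗ₘ i) ≫ m ≫ p) := by
  have hep : e ≫ p = p := by rw [← hpi, Category.assoc, hip, Category.comp_id]
  have hmul : ((i ⊗ₘ i) ≫ m ≫ p) ≫ i = (i ⊗ₘ i) ≫ m := by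
    rw [Category.assoc, Category.assoc, hpi, hme]
  have hunit : (u ≫ p) ≫ i = u ≫ e := by rw [Category.assoc, hpi]
  refine ⟨?_, ?_, ?_⟩
  · calc ((u ≫ p) ▷ P) ≫ (i ⊗ₘ i) ≫ m ≫ p
        = (𝟙_ C ◁ i) ≫ (u ▷ X) ≫ (e ▷ X) ≫ m ≫ p := by
          rw [whiskerRight_comp_tensorHom_assoc, hunit, tensorHom_def'_assoc,
            comp_whiskerRight_assoc]
      _ = (λ_ P).hom := by
          have hl : (u ▷ X) ≫ m = (λ_ X).hom ≫ e := by rw [← hul]; simp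
          rw [reassoc_of% whiskerRight_comp_mul_eq_mul_comp hassoc hul, reassoc_of% hl]
          simp [hep, hip]
  · calc (P ◁ (u ≫ p)) ≫ (i ⊗ₘ i) ≫ m ≫ p
        = (i ▷ 𝟙_ C) ≫ (X ◁ u) ≫ (X ◁ e) ≫ m ≫ p := by
          rw [whiskerLeft_comp_tensorHom_assoc, hunit, tensorHom_def_assoc,
            MonoidalCategory.whiskerLeft_comp_assoc]
      _ = (ρ_ P).hom := by
          have hr : (X ◁ u) ≫ m = (ρ_ X).hom ≫ e := by rw [← hur]; simp
          rw [reassoc_of% whiskerLeft_comp_mul_eq_mul_comp hassoc hur, reassoc_of% hr]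
          simp [hep, hip]
  · calc (((i ⊗ₘ i) ≫ m ≫ p) ▷ P) ≫ (i ⊗ₘ i) ≫ m ≫ p
        = ((i ⊗ₘ i) ⊗ₘ i) ≫ (m ▷ X) ≫ m ≫ p := by
          rw [whiskerRight_comp_tensorHom_assoc, hmul, ← tensorHom_comp_whiskerRight_assoc]
      _ = (α_ P P P).hom ≫ (i ⊗ₘ (i ⊗ₘ i)) ≫ (X ◁ m) ≫ m ≫ p := by
          rw [reassoc_of% hassoc, associator_naturality_assoc]
      _ = (α_ P P P).hom ≫ (P ◁ ((i ⊗ₘ i) ≫ m ≫ p)) ≫ (i ⊗ₘ i) ≫ m ≫ p := by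
          rw [whiskerLeft_comp_tensorHom_assoc, hmul, tensorHom_comp_whiskerLeft_assoc]

end Retract

section KleisliCalculus

variable {A : C} {mu : A ⊗ A ⟶ A}

theorem whiskerLeft_comp_tmap {X' X Y : C} (f : X' ⟶ X) (g : X ⟶ A ⊗ Y) :
    (A ◁ f) ≫ tmap A mu g = tmap A mu (f ≫ g) := by
  simp [tmap]

theorem phi_eq_tmap {X Z Y : C} (f : X ⊗ Z ⟶ A ⊗ Y) :
    phi A mu f = (α_ A X Z).hom ≫ tmap A mu f := by
  simp [phi, tmap]

theorem phi_whiskerLeft_comp {X Z Z' Y : C} (k : Z ⟶ Z') (f : X ⊗ Z' ⟶ A ⊗ Y) :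
    phi A mu ((X ◁ k) ≫ f) = ((A ⊗ X) ◁ k) ≫ phi A mu f := by
  simp only [phi, MonoidalCategory.whiskerLeft_comp, Category.assoc]
  rw [associator_naturality_right_assoc]

theorem leftLin_tmap (hassoc : (mu ▷ A) ≫ mu = (α_ A A A).hom ≫ (A ◁ mu) ≫ mu)
    {X Y : C} (g : X ⟶ A ⊗ Y) : LeftLin A mu (tmap A mu g) := by
  simp only [LeftLin, tmap, MonoidalCategory.whiskerLeft_comp]
  rw [← whisker_exchange_assoc, associator_inv_naturality_left_assoc,
    ← comp_whiskerRight, hassoc]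
  simp only [comp_whiskerRight, Category.assoc]
  monoidal

theorem tmap_comp_tmap (hassoc : (mu ▷ A) ≫ mu = (α_ A A A).hom ≫ (A ◁ mu) ≫ mu)
    {X Y Z : C} (g : X ⟶ A ⊗ Y) (h : Y ⟶ A ⊗ Z) :
    tmap A mu g ≫ tmap A mu h = tmap A mu (g ≫ tmap A mu h) := by
  conv_lhs => rw [tmap]
  slice_lhs 3 4 => rw [leftLin_tmap hassoc]
  simp [tmap]

theorem etaT_comp_tmap {eta : 𝟙_ C ⟶ A} (heta : (eta ▷ A) ≫ mu = (λ_ A).hom)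
    {X Y : C} (g : X ⟶ A ⊗ Y) : etaT A X eta ≫ tmap A mu g = g := by
  simp only [etaT, tmap, Category.assoc]
  rw [← whisker_exchange_assoc, associator_inv_naturality_left_assoc,
    ← comp_whiskerRight, heta]
  monoidal

theorem tmap_whiskerRight_comp_phi (hassoc : (mu ▷ A) ≫ mu = (α_ A A A).hom ≫ (A ◁ mu) ≫ mu)
    {W Y Z T : C} (F : W ⟶ A ⊗ Y) (H : Y ⊗ Z ⟶ A ⊗ T) :
    (tmap A mu F ▷ Z) ≫ phi A mu H = (α_ A W Z).hom ≫ tmap A mu ((F ▷ Z) ≫ phi A mu H) := by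
  simp only [phi_eq_tmap]
  conv_lhs => rw [tmap]
  simp only [comp_whiskerRight, Category.assoc]
  rw [associator_naturality_left_assoc, leftLin_tmap hassoc]
  simp only [tmap, MonoidalCategory.whiskerLeft_comp, Category.assoc]
  monoidal

theorem phi_whiskerRight_comp_phi (hassoc : (mu ▷ A) ≫ mu = (α_ A A A).hom ≫ (A ◁ mu) ≫ mu)
    {P Q S U T : C} (g : P ⊗ Q ⟶ A ⊗ S) (h : S ⊗ U ⟶ A ⊗ T) :
    (phi A mu g ▷ U) ≫ phi A mu h =
      (α_ (A ⊗ P) Q U).hom ≫ phi A mu ((α_ P Q U).inv ≫ (g ▷ U) ≫ phi A mu h) := by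
  conv_lhs => rw [phi_eq_tmap g]
  simp only [comp_whiskerRight, Category.assoc]
  rw [tmap_whiskerRight_comp_phi hassoc]
  simp only [phi_eq_tmap, tmap, MonoidalCategory.whiskerLeft_comp, Category.assoc]
  monoidal

end KleisliCalculus

/-- The `V`-part of the product: `μ_{A⊗V} = (μ_A ⊗ V) ∘ (A ⊗ twistMul)`. -/
def twistMul (A V : C) (mu : A ⊗ A ⟶ A) (psi : V ⊗ A ⟶ A ⊗ V) (sig : V ⊗ V ⟶ A ⊗ V) :
    V ⊗ (A ⊗ V) ⟶ A ⊗ V :=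
  (α_ V A V).inv ≫ (psi ▷ V) ≫ phi A mu sig

section CrossedProduct

variable {A V : C} {eta : 𝟙_ C ⟶ A} {mu : A ⊗ A ⟶ A} {psi : V ⊗ A ⟶ A ⊗ V}
  {sig : V ⊗ V ⟶ A ⊗ V} {nu : 𝟙_ C ⟶ A ⊗ V}

theorem nabla_eq_tmap : nabla A V eta mu psi = tmap A mu ((ρ_ V).inv ≫ (V ◁ eta) ≫ psi) := by
  have hcoh : (ρ_ (A ⊗ V)).inv ≫ ((A ⊗ V) ◁ eta) ≫ (α_ A V A).hom =
      A ◁ ((ρ_ V).inv ≫ (V ◁ eta)) := by monoidal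
  rw [nabla, phi_eq_tmap, reassoc_of% hcoh, whiskerLeft_comp_tmap, Category.assoc]

theorem prodAV_eq_phi (hassoc : (mu ▷ A) ≫ mu = (α_ A A A).hom ≫ (A ◁ mu) ≫ mu) :
    prodAV A V mu psi sig = phi A mu (twistMul A V mu psi sig) := by
  rw [prodAV, MonoidalCategory.tensorHom_def, phi_eq_tmap, twistMul]
  simp only [Category.assoc]
  rw [← tmap, leftLin_tmap hassoc]
  simp only [phi_eq_tmap, tmap, MonoidalCategory.whiskerLeft_comp, Category.assoc]
  monoidal

theorem prodAV_eq_phi_whiskerRight_phi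
    (hassoc : (mu ▷ A) ≫ mu = (α_ A A A).hom ≫ (A ◁ mu) ≫ mu) :
    prodAV A V mu psi sig = (α_ (A ⊗ V) A V).inv ≫ (phi A mu psi ▷ V) ≫ phi A mu sig := by
  rw [phi_whiskerRight_comp_phi hassoc, prodAV_eq_phi hassoc, twistMul, Iso.inv_hom_id_assoc]

theorem whiskerLeft_tmap_comp_psi_phi (hassoc : (mu ▷ A) ≫ mu = (α_ A A A).hom ≫ (A ◁ mu) ≫ mu)
    (hm : Measuring A V mu psi) {X Y U : C} (g : X ⟶ A ⊗ Y) (G : V ⊗ Y ⟶ A ⊗ U) :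
    (V ◁ tmap A mu g) ≫ (α_ V A Y).inv ≫ (psi ▷ Y) ≫ phi A mu G =
      (α_ V A X).inv ≫ (psi ▷ X) ≫
        phi A mu ((V ◁ g) ≫ (α_ V A Y).inv ≫ (psi ▷ Y) ≫ phi A mu G) := by
  have hm' : (V ◁ mu) ≫ psi = (α_ V A A).inv ≫ (psi ▷ A) ≫ phi A mu psi := by
    rw [hm]; simp
  rw [phi_whiskerLeft_comp]
  conv_lhs => rw [tmap]
  simp only [MonoidalCategory.whiskerLeft_comp, Category.assoc]
  rw [associator_inv_naturality_middle_assoc, ← comp_whiskerRight_assoc, hm']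
  simp only [comp_whiskerRight, Category.assoc]
  rw [phi_whiskerRight_comp_phi hassoc, ← whisker_exchange_assoc]
  monoidal

theorem prodAV_comp_nabla (hassoc : (mu ▷ A) ≫ mu = (α_ A A A).hom ≫ (A ◁ mu) ≫ mu)
    (hsig : sig ≫ nabla A V eta mu psi = sig) :
    prodAV A V mu psi sig ≫ nabla A V eta mu psi = prodAV A V mu psi sig := by
  rw [nabla_eq_tmap] at hsig ⊢
  rw [prodAV_eq_phi hassoc, twistMul, phi_eq_tmap, Category.assoc, tmap_comp_tmap hassoc]
  simp only [Category.assoc, phi_eq_tmap, tmap_comp_tmap hassoc, hsig]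

theorem prodAV_nu_eq_nabla (hassoc : (mu ▷ A) ≫ mu = (α_ A A A).hom ≫ (A ◁ mu) ≫ mu)
    (heta : (eta ▷ A) ≫ mu = (λ_ A).hom) (hp1 : Pre1 A V eta mu psi sig nu) :
    (ρ_ (A ⊗ V)).inv ≫ ((A ⊗ V) ◁ nu) ≫ prodAV A V mu psi sig = nabla A V eta mu psi := by
  have hnu : (ρ_ V).inv ≫ (V ◁ nu) ≫ twistMul A V mu psi sig = (ρ_ V).inv ≫ (V ◁ eta) ≫ psi := by
    rw [twistMul, hp1, nabla_eq_tmap, etaT_comp_tmap heta]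
  have hcoh : (ρ_ (A ⊗ V)).inv ≫ ((A ⊗ V) ◁ nu) ≫ (α_ A V (A ⊗ V)).hom =
      A ◁ ((ρ_ V).inv ≫ (V ◁ nu)) := by monoidal
  rw [prodAV_eq_phi hassoc, phi_eq_tmap, reassoc_of% hcoh, whiskerLeft_comp_tmap, Category.assoc,
    hnu, nabla_eq_tmap]

theorem nu_prodAV_eq_nabla (hassoc : (mu ▷ A) ≫ mu = (α_ A A A).hom ≫ (A ◁ mu) ≫ mu)
    (heta : (eta ▷ A) ≫ mu = (λ_ A).hom) (hp2 : Pre2 A V eta mu psi sig nu)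
    (hp3 : Pre3 A V mu psi nu) :
    (λ_ (A ⊗ V)).inv ≫ (nu ▷ (A ⊗ V)) ≫ prodAV A V mu psi sig = nabla A V eta mu psi := by
  have hsig : (nu ▷ V) ≫ phi A mu sig = (λ_ V).hom ≫ (ρ_ V).inv ≫ (V ◁ eta) ≫ psi := by
    rw [← Iso.inv_comp_eq, hp2, nabla_eq_tmap, etaT_comp_tmap heta]
  have hpsi : (nu ▷ A) ≫ phi A mu psi = (λ_ A).hom ≫ (ρ_ A).inv ≫ tmap A mu nu := by
    rw [← Iso.inv_comp_eq, hp3, beta, tmap]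
  rw [prodAV_eq_phi_whiskerRight_phi hassoc, associator_inv_naturality_left_assoc,
    ← comp_whiskerRight_assoc, hpsi]
  simp only [comp_whiskerRight, Category.assoc]
  rw [tmap_whiskerRight_comp_phi hassoc, hsig, ← whiskerLeft_comp_tmap, nabla_eq_tmap]
  monoidal

theorem whiskerLeft_phi_comp_twistMul (hassoc : (mu ▷ A) ≫ mu = (α_ A A A).hom ≫ (A ◁ mu) ≫ mu)
    (hm : Measuring A V mu psi) (hc : Cocycle A V mu psi sig) :
    (V ◁ phi A mu sig) ≫ twistMul A V mu psi sig =
      (V ◁ (α_ A V V).hom) ≫ (α_ V A (V ⊗ V)).inv ≫ (psi ▷ (V ⊗ V)) ≫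
        phi A mu ((α_ V V V).inv ≫ (sig ▷ V) ≫ phi A mu sig) := by
  have hc' : (V ◁ sig) ≫ twistMul A V mu psi sig = (α_ V V V).inv ≫ (sig ▷ V) ≫ phi A mu sig := by
    rw [hc, twistMul, Iso.inv_hom_id_assoc]
  conv_lhs => rw [phi_eq_tmap, MonoidalCategory.whiskerLeft_comp, Category.assoc, twistMul,
    whiskerLeft_tmap_comp_psi_phi hassoc hm, ← twistMul, hc']

theorem phi_sig_whiskerRight_phi_psi (hassoc : (mu ▷ A) ≫ mu = (α_ A A A).hom ≫ (A ◁ mu) ≫ mu)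
    (ht : Twisted A V mu psi sig) :
    (phi A mu sig ▷ A) ≫ phi A mu psi =
      (α_ (A ⊗ V) V A).hom ≫ phi A mu ((V ◁ psi) ≫ twistMul A V mu psi sig) := by
  rw [phi_whiskerRight_comp_phi hassoc, ht, twistMul, Iso.inv_hom_id_assoc]

theorem twistMul_assoc (hassoc : (mu ▷ A) ≫ mu = (α_ A A A).hom ≫ (A ◁ mu) ≫ mu)
    (hm : Measuring A V mu psi) (ht : Twisted A V mu psi sig) (hc : Cocycle A V mu psi sig) :
    (twistMul A V mu psi sig ▷ (A ⊗ V)) ≫ phi A mu (twistMul A V mu psi sig) =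
      (α_ V (A ⊗ V) (A ⊗ V)).hom ≫ (V ◁ prodAV A V mu psi sig) ≫ twistMul A V mu psi sig := by
  have hright : (V ◁ twistMul A V mu psi sig) ≫ twistMul A V mu psi sig =
      (V ◁ (α_ V A V).inv) ≫ (V ◁ (psi ▷ V)) ≫ (V ◁ (α_ A V V).hom) ≫ (α_ V A (V ⊗ V)).inv ≫
        (psi ▷ (V ⊗ V)) ≫ phi A mu ((α_ V V V).inv ≫ (sig ▷ V) ≫ phi A mu sig) := by
    nth_rw 1 [twistMul]
    simp only [MonoidalCategory.whiskerLeft_comp, Category.assoc]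
    rw [whiskerLeft_phi_comp_twistMul hassoc hm hc]
  have hleft : (twistMul A V mu psi sig ▷ A) ≫ phi A mu psi =
      ((α_ V A V).inv ▷ A) ≫ ((psi ▷ V) ▷ A) ≫ (α_ (A ⊗ V) V A).hom ≫
        phi A mu ((V ◁ psi) ≫ twistMul A V mu psi sig) := by
    nth_rw 1 [twistMul]
    simp only [comp_whiskerRight, Category.assoc]
    rw [phi_sig_whiskerRight_phi_psi hassoc ht]
  conv_rhs => rw [prodAV_eq_phi hassoc, phi_eq_tmap, MonoidalCategory.whiskerLeft_comp,
    Category.assoc, twistMul, whiskerLeft_tmap_comp_psi_phi hassoc hm, ← twistMul, hright]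
  rw [← prodAV_eq_phi hassoc, prodAV_eq_phi_whiskerRight_phi hassoc,
    associator_inv_naturality_left_assoc, ← comp_whiskerRight_assoc, hleft]
  simp only [comp_whiskerRight, Category.assoc]
  rw [phi_whiskerRight_comp_phi hassoc, twistMul]
  simp only [comp_whiskerRight, Category.assoc]
  rw [phi_whiskerRight_comp_phi hassoc sig sig]
  simp only [phi, MonoidalCategory.whiskerLeft_comp, Category.assoc]
  monoidal

theorem prodAV_assoc (hassoc : (mu ▷ A) ≫ mu = (α_ A A A).hom ≫ (A ◁ mu) ≫ mu)
    (hm : Measuring A V mu psi) (ht : Twisted A V mu psi sig) (hc : Cocycle A V mu psi sig) :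
    (prodAV A V mu psi sig ▷ (A ⊗ V)) ≫ prodAV A V mu psi sig =
      (α_ (A ⊗ V) (A ⊗ V) (A ⊗ V)).hom ≫ ((A ⊗ V) ◁ prodAV A V mu psi sig) ≫
        prodAV A V mu psi sig := by
  rw [prodAV_eq_phi hassoc]
  nth_rw 1 [phi_eq_tmap]
  rw [comp_whiskerRight, Category.assoc, tmap_whiskerRight_comp_phi hassoc,
    twistMul_assoc hassoc hm ht hc, prodAV_eq_phi hassoc]
  simp only [phi_eq_tmap]
  rw [associator_naturality_right_assoc, whiskerLeft_comp_tmap, ← whiskerLeft_comp_tmap]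
  monoidal

end CrossedProduct

/-- if `(A⊗V, μ_{A⊗V})` is a weak crossed product with preunit `ν`,
then `A × V` is a monoid with product `p ∘ μ_{A⊗V} ∘ (i ⊗ i)` and unit `p ∘ ν`. -/
theorem image_is_monoid (A V : C) (eta : 𝟙_ C ⟶ A) (mu : A ⊗ A ⟶ A)
    (hA : IsMon A eta mu) (psi : V ⊗ A ⟶ A ⊗ V) (sig : V ⊗ V ⟶ A ⊗ V)
    (nu : 𝟙_ C ⟶ A ⊗ V) (h : WCPpre A V eta mu psi sig nu)
    (P : C) (p : A ⊗ V ⟶ P) (i : P ⟶ A ⊗ V)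
    (hpi : p ≫ i = nabla A V eta mu psi) (hip : i ≫ p = 𝟙 P) :
    IsMon P (nu ≫ p) ((i ⊗ₘ i) ≫ prodAV A V mu psi sig ≫ p) := by
  obtain ⟨⟨hm, ht, hc, hsig⟩, hp1, hp2, hp3⟩ := h
  obtain ⟨heta, -, hassoc⟩ := hA
  exact isMon_of_retract (prodAV_assoc hassoc hm ht hc) (nu_prodAV_eq_nabla hassoc heta hp2 hp3)
    (prodAV_nu_eq_nabla hassoc heta hp1) (prodAV_comp_nabla hassoc hsig) hpi hip

end WeakCrossed
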